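/- arXiv:2107.05692 — 2 statements merged into one kernel-verified Lean document; each statement's English description precedes it below -/
import Mathlib

section
/- Let n be even and positive and let A be a submodule of V with finrank A = n/2. Let r : V⧸A → V and r' : V⧸A^⊥ → V be sections of the quotient maps (so r(c) represents the coset c of A and r'(c') represents the coset c' of A^⊥). Then the family ((c,c') ↦ |A_{r(c), r'(c')}⟩), indexed by (V⧸A) × (V⧸A^⊥), is an orthonormal basis of EuclideanSpace ℂ V. -/
open scoped BigOperators Kronecker Classical ComplexOrder

noncomputable section

/-- The vector space `F₂ⁿ`. -/
abbrev V (n : ℕ) : Type := Fin n → ZMod 2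

/-- The standard bilinear pairing `⟨x,y⟩ = ∑ i, xᵢ * yᵢ` on `F₂ⁿ`. -/
def pairing {n : ℕ} (x y : V n) : ZMod 2 := ∑ i, x i * y i

/-- `(−1)^b ∈ ℂ` for `b : ZMod 2`. -/
def sign (b : ZMod 2) : ℂ := if b = 0 then 1 else -1

lemma pairing_add_right {n : ℕ} (x y z : V n) :
    pairing x (y + z) = pairing x y + pairing x z := by
  simp [pairing, mul_add, Finset.sum_add_distrib]

lemma pairing_smul_right {n : ℕ} (c : ZMod 2) (x y : V n) :
    pairing x (c • y) = c * pairing x y := by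
  simp only [pairing, Pi.smul_apply, smul_eq_mul, Finset.mul_sum]
  exact Finset.sum_congr rfl fun i _ => by ring

/-- The orthogonal complement `A^⊥ = {y | ∀ a ∈ A, ⟨a,y⟩ = 0}`. -/
def perp {n : ℕ} (A : Submodule (ZMod 2) (V n)) : Submodule (ZMod 2) (V n) where
  carrier := {y | ∀ a ∈ A, pairing a y = 0}
  zero_mem' := by
    simp only [Set.mem_setOf_eq]
    intro a _
    simp [pairing]
  add_mem' := by
    intro y z hy hz
    simp only [Set.mem_setOf_eq] at *
    intro a ha
    rw [pairing_add_right, hy a ha, hz a ha, add_zero]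
  smul_mem' := by
    intro c y hy
    simp only [Set.mem_setOf_eq] at *
    intro a ha
    rw [pairing_smul_right, hy a ha, mul_zero]

/-- The coset `A + s = {a + s : a ∈ A}`. -/
def coset {n : ℕ} (A : Submodule (ZMod 2) (V n)) (s : V n) : Set (V n) :=
  {v | ∃ a ∈ A, v = a + s}

noncomputable instance {n : ℕ} (A : Submodule (ZMod 2) (V n)) : Fintype A :=
  Fintype.ofFinite _

/-- The coset state `|A_{s,s'}⟩ = |A|^{−1/2} ∑_{a ∈ A} (−1)^{⟨a,s'⟩} e_{a+s}`. -/
noncomputable def cosetState {n : ℕ} (A : Submodule (ZMod 2) (V n)) (s s' : V n) :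
    EuclideanSpace ℂ (V n) :=
  ((Real.sqrt (Nat.card A) : ℂ))⁻¹ •
    ∑ a : A, sign (pairing (a : V n) s') • EuclideanSpace.single ((a : V n) + s) (1 : ℂ)

/-- A family of orthogonal projections: each member is Hermitian and idempotent. -/
def IsProjFamily {ι m : Type*} [Fintype m] (P : ι → Matrix m m ℂ) : Prop :=
  ∀ p, (P p).IsHermitian ∧ P p * P p = P p

/-- Coset invariance of a family indexed by pairs `(s, s')`:
the value depends only on the pair of cosets `(A + s, A^⊥ + s')`. -/
def CosetInvariant {n : ℕ} {α : Type*} (A : Submodule (ZMod 2) (V n))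
    (F : V n × V n → α) : Prop :=
  ∀ s₁ s₁' s₂ s₂' : V n, coset A s₁ = coset A s₂ →
    coset (perp A) s₁' = coset (perp A) s₂' → F (s₁, s₁') = F (s₂, s₂')

/-- The rank-one matrix `|A_{s,s'}⟩⟨A_{s,s'}|`. -/
noncomputable def outer {n : ℕ} (A : Submodule (ZMod 2) (V n)) (s s' : V n) :
    Matrix (V n) (V n) ℂ :=
  Matrix.of fun x y => cosetState A s s' x * (starRingEnd ℂ) (cosetState A s s' y)

/-- `Π^A[P,Q] = 2^{−n} ∑_{s,s'} |A_{s,s'}⟩⟨A_{s,s'}| ⊗ P(s,s') ⊗ Q(s,s')`. -/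
noncomputable def PiMat {n : ℕ} {I J : Type*} [Fintype I] [Fintype J]
    (A : Submodule (ZMod 2) (V n)) (P : V n × V n → Matrix I I ℂ)
    (Q : V n × V n → Matrix J J ℂ) : Matrix (V n × I × J) (V n × I × J) ℂ :=
  ((2 : ℂ) ^ n)⁻¹ • ∑ s : V n, ∑ s' : V n, (outer A s s') ⊗ₖ (P (s, s') ⊗ₖ Q (s, s'))

/-- The `ℓ² → ℓ²` operator norm of a complex square matrix. -/
noncomputable def opNorm {m : Type*} [Fintype m] [DecidableEq m] (M : Matrix m m ℂ) : ℝ :=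
  ‖Matrix.toEuclideanCLM (𝕜 := ℂ) M‖

/-! Coset states whose shifts lie in different cosets of `A` have disjoint supports. Coset states
with the same shift `s` differ only by the character `a ↦ (−1)^⟨a, s' − t'⟩` of `A`, so their inner
product is the average of that character over `A`: `1` if `s' − t' ∈ A^⊥` and `0` otherwise. Hence
the family is orthonormal, and it spans because nondegeneracy of the dot product gives
`dim A^⊥ = n − dim A`, so `|V/A| · |V/A^⊥| = 2^(n − dim A) · 2^(dim A) = |V|`. -/

open Finset

variable {n : ℕ}

lemma pairing_eq_dotProduct (x y : V n) : pairing x y = x ⬝ᵥ y := rfl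

lemma perp_eq_orthogonal (A : Submodule (ZMod 2) (V n)) :
    perp A = LinearMap.BilinForm.orthogonal (dotProductBilin (ZMod 2) (ZMod 2)) A := rfl

lemma finrank_perp (A : Submodule (ZMod 2) (V n)) :
    Module.finrank (ZMod 2) (perp A) = n - Module.finrank (ZMod 2) A := by
  have hnd :
      (dotProductBilin (ZMod 2) (ZMod 2) : LinearMap.BilinForm (ZMod 2) (V n)).Nondegenerate :=
    ⟨fun x hx => dotProduct_eq_zero x hx,
      fun y hy => dotProduct_eq_zero y fun x => (dotProduct_comm y x).trans (hy x)⟩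
  rw [perp_eq_orthogonal, LinearMap.BilinForm.finrank_orthogonal hnd, Module.finrank_fin_fun]

lemma card_quotient_mul_card_quotient_perp (A : Submodule (ZMod 2) (V n)) :
    Nat.card (V n ⧸ A) * Nat.card (V n ⧸ perp A) = Nat.card (V n) := by
  have hA := Submodule.finrank_quotient_add_finrank A
  have hperp := Submodule.finrank_quotient_add_finrank (perp A)
  have hle := Submodule.finrank_le A
  rw [finrank_perp, Module.finrank_fin_fun] at hperp
  rw [Module.finrank_fin_fun] at hA hle
  rw [Module.natCard_eq_pow_finrank (K := ZMod 2) (V := V n ⧸ A),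
    Module.natCard_eq_pow_finrank (K := ZMod 2) (V := V n ⧸ perp A),
    Module.natCard_eq_pow_finrank (K := ZMod 2) (V := V n), ← pow_add, Module.finrank_fin_fun]
  congr 1
  omega

lemma sign_add (b c : ZMod 2) : sign (b + c) = sign b * sign c := by
  obtain rfl | rfl : b = 0 ∨ b = 1 := by revert b; decide
  all_goals obtain rfl | rfl : c = 0 ∨ c = 1 := by revert c; decide
  all_goals simp [sign, show (1 + 1 : ZMod 2) = 0 from rfl]

lemma sign_of_ne_zero {b : ZMod 2} (hb : b ≠ 0) : sign b = -1 := if_neg hb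

lemma sign_sub (b c : ZMod 2) : sign (b - c) = sign b * sign c := by
  rw [ZModModule.sub_eq_add, sign_add]

lemma conj_sign (b : ZMod 2) : (starRingEnd ℂ) (sign b) = sign b := by
  unfold sign; split_ifs <;> simp

lemma sum_sign_pairing_of_notMem_perp {A : Submodule (ZMod 2) (V n)} {u : V n}
    (hu : u ∉ perp A) : ∑ a : A, sign (pairing (a : V n) u) = 0 := by
  obtain ⟨a₀, ha₀, h⟩ : ∃ a ∈ A, a ⬝ᵥ u ≠ 0 := by
    simpa [perp, pairing_eq_dotProduct] using hu
  have hneg : ∑ a : A, sign (pairing (a : V n) u) = -∑ a : A, sign (pairing (a : V n) u) := by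
    nth_rw 1 [← Equiv.sum_comp (Equiv.addRight ⟨a₀, ha₀⟩), ← sum_neg_distrib]
    refine sum_congr rfl fun a _ => ?_
    simp only [Equiv.coe_addRight, Submodule.coe_add, pairing_eq_dotProduct, add_dotProduct,
      sign_add, sign_of_ne_zero h]
    ring
  exact self_eq_neg.mp hneg

lemma sum_sign_pairing_of_mem_perp {A : Submodule (ZMod 2) (V n)} {u : V n}
    (hu : u ∈ perp A) : ∑ a : A, sign (pairing (a : V n) u) = Nat.card A := by
  simp [fun a : A => hu a a.2, sign, Nat.card_eq_fintype_card]

lemma orthonormal_single_of_injective {ι α : Type*} [Fintype α] [DecidableEq α] {f : ι → α}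
    (hf : Function.Injective f) : Orthonormal ℂ fun i => EuclideanSpace.single (f i) (1 : ℂ) := by
  simpa [Function.comp_def] using (EuclideanSpace.basisFun α ℂ).orthonormal.comp f hf

lemma conj_inv_sqrt_mul_inv_sqrt (N : ℕ) :
    (starRingEnd ℂ) ((√N : ℂ)⁻¹) * (√N : ℂ)⁻¹ = (N : ℂ)⁻¹ := by
  rw [map_inv₀, Complex.conj_ofReal, ← mul_inv, ← Complex.ofReal_mul,
    Real.mul_self_sqrt (Nat.cast_nonneg _), Complex.ofReal_natCast]

lemma inner_cosetState_same_shift (A : Submodule (ZMod 2) (V n)) (s s' t' : V n) :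
    inner ℂ (cosetState A s s') (cosetState A s t') =
      (Nat.card A : ℂ)⁻¹ * ∑ a : A, sign (pairing (a : V n) (s' - t')) := by
  have hinj : Function.Injective fun a : A => (a : V n) + s :=
    fun a b h => Subtype.ext (add_right_cancel h)
  rw [cosetState, cosetState, inner_smul_left, inner_smul_right,
    (orthonormal_single_of_injective hinj).inner_sum, ← mul_assoc, conj_inv_sqrt_mul_inv_sqrt]
  simp only [conj_sign, pairing_eq_dotProduct, dotProduct_sub, sign_sub]

lemma inner_cosetState_eq_zero_of_sub_notMem {A : Submodule (ZMod 2) (V n)} {s t : V n}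
    (h : s - t ∉ A) (s' t' : V n) : inner ℂ (cosetState A s s') (cosetState A t t') = 0 := by
  have hne : ∀ a b : A, (a : V n) + s ≠ b + t := fun a b hab =>
    h (by rw [show s - t = b - a by linear_combination hab]; exact sub_mem b.2 a.2)
  simp [cosetState, EuclideanSpace.inner_single_left, hne]

lemma inner_cosetState_same_shift_eq_ite (A : Submodule (ZMod 2) (V n)) (s s' t' : V n) :
    inner ℂ (cosetState A s s') (cosetState A s t') = if s' - t' ∈ perp A then 1 else 0 := by
  rw [inner_cosetState_same_shift]
  split_ifs with h
  · rw [sum_sign_pairing_of_mem_perp h, inv_mul_cancel₀ (by exact_mod_cast Nat.card_pos.ne')]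
  · rw [sum_sign_pairing_of_notMem_perp h, mul_zero]

theorem cosetState_orthonormal_basis_general
    {n : ℕ}
    (A : Submodule (ZMod 2) (V n))
    (r : (V n ⧸ A) → V n)
    (hr : ∀ c : V n ⧸ A, (Submodule.Quotient.mk (r c) : V n ⧸ A) = c)
    (r' : (V n ⧸ perp A) → V n)
    (hr' : ∀ c : V n ⧸ perp A, (Submodule.Quotient.mk (r' c) : V n ⧸ perp A) = c) :
    Orthonormal ℂ
      (fun p : (V n ⧸ A) × (V n ⧸ perp A) => cosetState A (r p.1) (r' p.2)) ∧
    Submodule.span ℂ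
      (Set.range fun p : (V n ⧸ A) × (V n ⧸ perp A) => cosetState A (r p.1) (r' p.2)) = ⊤ := by
  have hsub : ∀ c d, r c - r d ∈ A ↔ c = d := by
    intro c d; rw [← Submodule.Quotient.eq, hr, hr]
  have hsub' : ∀ c d, r' c - r' d ∈ perp A ↔ c = d := by
    intro c d; rw [← Submodule.Quotient.eq, hr', hr']
  have horth : Orthonormal ℂ
      (fun p : (V n ⧸ A) × (V n ⧸ perp A) => cosetState A (r p.1) (r' p.2)) := by
    rw [orthonormal_iff_ite]
    rintro ⟨c, c'⟩ ⟨d, d'⟩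
    by_cases hcd : c = d
    · subst hcd
      simp [inner_cosetState_same_shift_eq_ite, hsub']
    · simp [inner_cosetState_eq_zero_of_sub_notMem ((hsub c d).not.2 hcd), hcd]
  have := Fintype.ofFinite (V n ⧸ A)
  have := Fintype.ofFinite (V n ⧸ perp A)
  refine ⟨horth, horth.linearIndependent.span_eq_top_of_card_eq_finrank' ?_⟩
  rw [finrank_euclideanSpace, Fintype.card_prod, Fintype.card_eq_nat_card,
    Fintype.card_eq_nat_card, card_quotient_mul_card_quotient_perp, Fintype.card_eq_nat_card]

/-- Fixing an `n/2`-dimensional subspace `A` and sections of the quotient maps, the family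
of coset states indexed by pairs of cosets is an orthonormal basis of `EuclideanSpace ℂ V`. -/
theorem cosetState_orthonormal_basis
    {n : ℕ} (hn : 0 < n) (hne : Even n)
    (A : Submodule (ZMod 2) (V n)) (hA : Module.finrank (ZMod 2) A = n / 2)
    (r : (V n ⧸ A) → V n)
    (hr : ∀ c : V n ⧸ A, (Submodule.Quotient.mk (r c) : V n ⧸ A) = c)
    (r' : (V n ⧸ perp A) → V n)
    (hr' : ∀ c : V n ⧸ perp A, (Submodule.Quotient.mk (r' c) : V n ⧸ perp A) = c) :
    Orthonormal ℂ
      (fun p : (V n ⧸ A) × (V n ⧸ perp A) => cosetState A (r p.1) (r' p.2)) ∧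
    Submodule.span ℂ
      (Set.range fun p : (V n ⧸ A) × (V n ⧸ perp A) => cosetState A (r p.1) (r' p.2)) = ⊤ :=
  cosetState_orthonormal_basis_general A r hr r' hr'
end
end

section
/- Let n be even and positive, and let A and B be submodules of V with finrank A = finrank B = n/2. Then for all s₁, s₁', s₂, s₂' ∈ V, the Hermitian inner product satisfies |⟨|A_{s₁,s₁'}⟩, |B_{s₂,s₂'}⟩⟩| ≤ 2^{finrank(A ⊓ B)} / 2^{n/2}, where A ⊓ B is the intersection submodule. -/
open scoped BigOperators Kronecker Classical ComplexOrder

noncomputable section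

/-! A coset state is supported on its coset `A + s`, where all its entries have modulus
`|A|^{-1/2}`. Hence the overlap of `|A_{s₁,s₁'}⟩` and `|B_{s₂,s₂'}⟩` is at most
`|(A + s₁) ∩ (B + s₂)| / √(|A| |B|)`, and two cosets meet either not at all or in a translate
of `A ⊓ B`. -/

theorem Submodule.card_filter_sub_mem_sub_mem_le {R M : Type*} [Ring R] [AddCommGroup M]
    [Module R M] [Fintype M] (A B : Submodule R M) (s t : M) :
    (Finset.univ.filter fun v => v - s ∈ A ∧ v - t ∈ B).card ≤ Nat.card ↥(A ⊓ B) := by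
  rcases (Finset.univ.filter fun v => v - s ∈ A ∧ v - t ∈ B).eq_empty_or_nonempty
    with hempty | ⟨v₀, hv₀⟩
  · simp [hempty]
  rw [Nat.card_eq_fintype_card, Fintype.card_subtype]
  refine Finset.card_le_card_of_injOn (· - v₀) (fun v hv => ?_) sub_left_injective.injOn
  simp only [Finset.coe_filter, Finset.mem_filter, Finset.mem_univ, true_and,
    Set.mem_ofPred_eq] at hv hv₀ ⊢
  refine Submodule.mem_inf.2 ⟨?_, ?_⟩
  · simpa using A.sub_mem hv.1 hv₀.1
  · simpa using B.sub_mem hv.2 hv₀.2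

lemma norm_sign (b : ZMod 2) : ‖sign b‖ = 1 := by
  unfold sign; split_ifs <;> simp

section
variable {n : ℕ} (A B : Submodule (ZMod 2) (V n))

lemma cosetState_apply (s s' v : V n) :
    cosetState A s s' v = if v - s ∈ A then (√(Nat.card A) : ℂ)⁻¹ * sign (pairing (v - s) s')
      else 0 := by
  simp only [cosetState, PiLp.smul_apply, WithLp.ofLp_sum, Finset.sum_apply, PiLp.single_apply,
    smul_eq_mul, mul_ite, mul_one, mul_zero]
  split_ifs with hv
  · rw [Fintype.sum_eq_single ⟨v - s, hv⟩ fun a ha => if_neg ?_]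
    · simp
    · rintro rfl
      exact ha (Subtype.ext (add_sub_cancel_right _ _).symm)
  · refine mul_eq_zero_of_right _ (Finset.sum_eq_zero fun a _ => if_neg ?_)
    rintro rfl
    exact hv (by simp)

lemma norm_cosetState_apply (s s' v : V n) :
    ‖cosetState A s s' v‖ = if v - s ∈ A then (√(Nat.card A))⁻¹ else 0 := by
  rw [cosetState_apply]
  split_ifs <;> simp [norm_sign]

lemma norm_inner_cosetState_le (s₁ s₁' s₂ s₂' : V n) :
    ‖(inner ℂ (cosetState A s₁ s₁') (cosetState B s₂ s₂') : ℂ)‖ ≤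
      Nat.card ↥(A ⊓ B) / (√(Nat.card A) * √(Nat.card B)) := by
  calc ‖(inner ℂ (cosetState A s₁ s₁') (cosetState B s₂ s₂') : ℂ)‖
      ≤ ∑ v, ‖cosetState A s₁ s₁' v‖ * ‖cosetState B s₂ s₂' v‖ := by
        rw [PiLp.inner_apply]
        refine (norm_sum_le _ _).trans_eq ?_
        simp [mul_comm]
    _ = (Finset.univ.filter fun v => v - s₁ ∈ A ∧ v - s₂ ∈ B).card *
          ((√(Nat.card A))⁻¹ * (√(Nat.card B))⁻¹) := by
        simp only [norm_cosetState_apply, ite_zero_mul_ite_zero, Finset.sum_ite,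
          Finset.sum_const_zero, add_zero, Finset.sum_const, nsmul_eq_mul]
    _ ≤ Nat.card ↥(A ⊓ B) * ((√(Nat.card A))⁻¹ * (√(Nat.card B))⁻¹) := by
        gcongr
        exact_mod_cast A.card_filter_sub_mem_sub_mem_le B s₁ s₂
    _ = Nat.card ↥(A ⊓ B) / (√(Nat.card A) * √(Nat.card B)) := by
        rw [div_eq_mul_inv, mul_inv]

end

theorem abs_inner_cosetState_le_general
    {n : ℕ}
    (A B : Submodule (ZMod 2) (V n))
    (hA : Module.finrank (ZMod 2) A = n / 2) (hB : Module.finrank (ZMod 2) B = n / 2)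
    (s₁ s₁' s₂ s₂' : V n) :
    ‖(inner ℂ (cosetState A s₁ s₁') (cosetState B s₂ s₂') : ℂ)‖
      ≤ (2 : ℝ) ^ (Module.finrank (ZMod 2) ↥(A ⊓ B)) / (2 : ℝ) ^ (n / 2) := by
  have card_eq (C : Submodule (ZMod 2) (V n)) :
      (Nat.card C : ℝ) = 2 ^ Module.finrank (ZMod 2) C := by
    rw [Module.natCard_eq_pow_finrank (K := ZMod 2), Nat.card_zmod, Nat.cast_pow, Nat.cast_ofNat]
  have sqrt_mul_self : √((2 : ℝ) ^ (n / 2)) * √(2 ^ (n / 2)) = 2 ^ (n / 2) :=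
    Real.mul_self_sqrt (by positivity)
  simpa only [card_eq, hA, hB, sqrt_mul_self] using norm_inner_cosetState_le A B s₁ s₁' s₂ s₂'

/-- The overlap of two coset states for `n/2`-dimensional subspaces `A`, `B` is bounded by
`2^{dim(A ⊓ B)} / 2^{n/2}`. -/
theorem abs_inner_cosetState_le
    {n : ℕ} (hn : 0 < n) (hne : Even n)
    (A B : Submodule (ZMod 2) (V n))
    (hA : Module.finrank (ZMod 2) A = n / 2) (hB : Module.finrank (ZMod 2) B = n / 2)
    (s₁ s₁' s₂ s₂' : V n) :
    ‖(inner ℂ (cosetState A s₁ s₁') (cosetState B s₂ s₂') : ℂ)‖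
      ≤ (2 : ℝ) ^ (Module.finrank (ZMod 2) ↥(A ⊓ B)) / (2 : ℝ) ^ (n / 2) :=
  abs_inner_cosetState_le_general A B hA hB s₁ s₁' s₂ s₂'
end
end
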